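/- Let H be a finite simple graph that can be vertex-covered by vertex-disjoint paths of length at least two; that is, there exist vertex-disjoint paths P_{ℓ_1}, …, P_{ℓ_k}, each with ℓ_i ≥ 2 edges, such that V(H) is the disjoint union of their vertex sets and every edge of each path is an edge of H. Then C(P_2, H) = 3/v(H). -/

import Mathlib

open SimpleGraph

/-- The homomorphism density `t(G,T)`. -/
noncomputable def homDensity {α β : Type*} [Fintype α] [Fintype β]
    (G : SimpleGraph α) (T : SimpleGraph β) : ℝ :=
  (Nat.card (G →g T) : ℝ) / (Fintype.card β : ℝ) ^ (Fintype.card α)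
/-- The set of real exponents `c ≥ 0` such that `t(G,T) ≥ t(H,T)^c` for all
finite graphs `T` with at least one vertex. -/
def domSet {α β : Type*} [Fintype α] [Fintype β]
    (G : SimpleGraph α) (H : SimpleGraph β) : Set ℝ :=
  {c : ℝ | 0 ≤ c ∧ ∀ (n : ℕ), 0 < n → ∀ T : SimpleGraph (Fin n),
    homDensity H T ^ c ≤ homDensity G T}

/-- The homomorphism density domination exponent `C(G,H)`, as the infimum of `domSet G H`. -/
noncomputable def domExp {α β : Type*} [Fintype α] [Fintype β]
    (G : SimpleGraph α) (H : SimpleGraph β) : ℝ :=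
  sInf (domSet G H)

section Aux

open Finset Matrix RealInnerProductSpace

set_option linter.unusedSectionVars false
set_option maxHeartbeats 1000000

variable {V : Type*} [Fintype V] [DecidableEq V] (T : SimpleGraph V) [DecidableRel T.Adj]

/-- Sequences of length m+1 with consecutive adjacency, i.e. walks of length m. -/
def seqType (m : ℕ) : Type _ :=
  {g : Fin (m + 1) → V // ∀ j : Fin m, T.Adj (g j.castSucc) (g j.succ)}

noncomputable instance (m : ℕ) : Fintype (seqType T m) := by
  unfold seqType; infer_instance

/-- A sequence with consecutive adjacency gives a hom from the path graph. -/
def seqHom {m : ℕ} (g : Fin (m + 1) → V)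
    (hg : ∀ j : Fin m, T.Adj (g j.castSucc) (g j.succ)) : pathGraph (m + 1) →g T where
  toFun := g
  map_rel' := by
    intro a b hab
    rw [pathGraph_adj] at hab
    rcases hab with h | h
    · have ha : (a : ℕ) < m := by omega
      have : a = (⟨a, ha⟩ : Fin m).castSucc ∧ b = (⟨a, ha⟩ : Fin m).succ := by
        constructor <;> [exact Fin.ext rfl; exact Fin.ext (by simp [← h])]
      rw [this.1, this.2]; exact hg _
    · have hb : (b : ℕ) < m := by omega
      have : b = (⟨b, hb⟩ : Fin m).castSucc ∧ a = (⟨b, hb⟩ : Fin m).succ := by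
        constructor <;> [exact Fin.ext rfl; exact Fin.ext (by simp [← h])]
      rw [this.1, this.2]; exact (hg _).symm

def homSeqEquiv (m : ℕ) : (pathGraph (m + 1) →g T) ≃ seqType T m where
  toFun φ := ⟨φ, fun j => φ.map_rel (by rw [pathGraph_adj]; left; simp)⟩
  invFun g := seqHom T g.1 g.2
  left_inv φ := rfl
  right_inv g := rfl

theorem card_hom_path (m : ℕ) :
    Nat.card (pathGraph (m + 1) →g T) = Fintype.card (seqType T m) := by
  rw [Nat.card_congr (homSeqEquiv T m), Nat.card_eq_fintype_card]

def seqFrom (m : ℕ) (u : V) : Type _ :=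
  {g : Fin (m + 1) → V // g 0 = u ∧ ∀ j : Fin m, T.Adj (g j.castSucc) (g j.succ)}

noncomputable instance (m : ℕ) (u : V) : Fintype (seqFrom T m u) := by
  unfold seqFrom; infer_instance

private lemma cons_cond {m : ℕ} (u : V) (h : Fin (m + 1) → V) (huv : T.Adj u (h 0))
    (hh : ∀ j : Fin m, T.Adj (h j.castSucc) (h j.succ)) :
    ∀ j : Fin (m + 1), T.Adj ((Fin.cons u h : Fin (m + 2) → V) j.castSucc)
      ((Fin.cons u h : Fin (m + 2) → V) j.succ) := by
  intro j
  refine Fin.cases ?_ (fun j' => ?_) j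
  · simpa using huv
  · rw [← Fin.succ_castSucc, Fin.cons_succ, Fin.cons_succ]; exact hh j'

private lemma heq_seqFrom {m : ℕ} {v w : V} (hvw : v = w) (a : seqFrom T m v)
    (b : seqFrom T m w) (hab : a.1 = b.1) : HEq a b := by
  subst hvw; exact heq_of_eq (Subtype.ext hab)

def seqFromSuccEquiv (m : ℕ) (u : V) :
    seqFrom T (m + 1) u ≃ Σ v : T.neighborSet u, seqFrom T m v where
  toFun g := ⟨⟨g.1 1, by
      have h0 := g.2.2 0
      simp only [Fin.castSucc_zero, Fin.succ_zero_eq_one] at h0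
      rw [g.2.1] at h0
      exact h0⟩,
    ⟨Fin.tail g.1, rfl, fun j => by
      have := g.2.2 j.succ
      simp only [Fin.tail]; rw [Fin.succ_castSucc]; exact this⟩⟩
  invFun p := ⟨Fin.cons u p.2.1, Fin.cons_zero _ _,
    cons_cond T u p.2.1 (p.2.2.1.symm ▸ p.1.2) p.2.2.2⟩
  left_inv g := by
    obtain ⟨g, hg0, hg⟩ := g
    apply Subtype.ext
    subst hg0
    exact Fin.cons_self_tail g
  right_inv p := by
    have h1 : (Fin.cons u p.2.1 : Fin (m + 2) → V) 1 = ↑p.1 := by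
      rw [show (1 : Fin (m + 2)) = Fin.succ 0 from rfl, Fin.cons_succ]
      exact p.2.2.1
    refine Sigma.ext (Subtype.ext h1) (heq_seqFrom T h1 _ _ ?_)
    exact Fin.tail_cons (α := fun _ => V) u p.2.1

theorem card_seqFrom_succ (m : ℕ) (u : V) :
    Fintype.card (seqFrom T (m + 1) u) =
      ∑ v ∈ T.neighborFinset u, Fintype.card (seqFrom T m v) := by
  rw [Fintype.card_congr (seqFromSuccEquiv T m u), Fintype.card_sigma]
  rw [show T.neighborFinset u = (T.neighborSet u).toFinset from rfl]
  exact Finset.sum_set_coe (f := fun v => Fintype.card (seqFrom T m v)) (T.neighborSet u)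

theorem card_seqFrom_eq (m : ℕ) (u : V) :
    (Fintype.card (seqFrom T m u) : ℝ) = ((T.adjMatrix ℝ ^ m) *ᵥ fun _ => 1) u := by
  induction m generalizing u with
  | zero =>
    rw [pow_zero, one_mulVec]
    rw [Fintype.card_eq_one_iff.2 ⟨⟨fun _ => u, rfl, fun j => j.elim0⟩, ?_⟩]
    · norm_num
    · rintro ⟨g, hg0, _⟩
      apply Subtype.ext
      funext i
      rw [Fin.eq_zero i]
      exact hg0
  | succ m ih =>
    rw [card_seqFrom_succ, pow_succ', ← mulVec_mulVec, adjMatrix_mulVec_apply]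
    push_cast
    exact Finset.sum_congr rfl fun v _ => ih v

def seqTypeSigmaEquiv (m : ℕ) : seqType T m ≃ Σ u : V, seqFrom T m u where
  toFun g := ⟨g.1 0, g.1, rfl, g.2⟩
  invFun p := ⟨p.2.1, p.2.2.2⟩
  left_inv g := rfl
  right_inv p := by
    refine Sigma.ext p.2.2.1 ?_
    obtain ⟨u, g, hg0, hg⟩ := p
    subst hg0
    rfl

theorem card_seqType_eq (m : ℕ) :
    (Fintype.card (seqType T m) : ℝ) = ∑ u, ((T.adjMatrix ℝ ^ m) *ᵥ fun _ => 1) u := by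
  rw [Fintype.card_congr (seqTypeSigmaEquiv T m), Fintype.card_sigma]
  push_cast
  exact Finset.sum_congr rfl fun u _ => card_seqFrom_eq T m u

theorem adjHerm : (T.adjMatrix ℝ).IsHermitian := by
  rw [IsHermitian, conjTranspose_eq_transpose_of_trivial, isSymm_adjMatrix]

/-- walk numbers -/
noncomputable def wfun (m : ℕ) : ℝ := ∑ u, ((T.adjMatrix ℝ ^ m) *ᵥ fun _ => 1) u

lemma adj_entry_nonneg (u v : V) : 0 ≤ T.adjMatrix ℝ u v := by
  rw [adjMatrix_apply]; split <;> norm_num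

lemma adj_entry_le_one (u v : V) : T.adjMatrix ℝ u v ≤ 1 := by
  rw [adjMatrix_apply]; split <;> norm_num

lemma adj_entry_symm (u v : V) : T.adjMatrix ℝ u v = T.adjMatrix ℝ v u := by
  simp [adjMatrix_apply, adj_comm]

lemma pow_entry_nonneg (m : ℕ) (u v : V) : 0 ≤ (T.adjMatrix ℝ ^ m) u v := by
  induction m generalizing u v with
  | zero => rw [pow_zero, one_apply]; split <;> norm_num
  | succ m ih =>
    rw [pow_succ, mul_apply]
    exact Finset.sum_nonneg fun a _ => mul_nonneg (ih u a) (adj_entry_nonneg T a v)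

lemma wfun_nonneg (m : ℕ) : 0 ≤ wfun T m := by
  refine Finset.sum_nonneg fun u _ => ?_
  simp only [mulVec, dotProduct]
  exact Finset.sum_nonneg fun v _ => by
    simpa using mul_nonneg (pow_entry_nonneg T m u v) zero_le_one

noncomputable def ev (i : V) : ℝ := (adjHerm T).eigenvalues i
noncomputable def evec (i : V) : V → ℝ := ⇑((adjHerm T).eigenvectorBasis i)
noncomputable def ecoef (i : V) : ℝ := dotProduct (evec T i) (fun _ => 1)

lemma pow_mulVec_evec (m : ℕ) (i : V) :
    (T.adjMatrix ℝ ^ m) *ᵥ evec T i = ev T i ^ m • evec T i := by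
  induction m with
  | zero => simp
  | succ m ih =>
    rw [pow_succ', ← mulVec_mulVec, ih, mulVec_smul]
    unfold evec ev
    rw [(adjHerm T).mulVec_eigenvectorBasis i, smul_smul]
    rw [show (adjHerm T).eigenvalues i ^ m * (adjHerm T).eigenvalues i
      = (adjHerm T).eigenvalues i ^ (m + 1) by ring]

lemma ones_eq_sum : (fun _ => (1:ℝ)) = ∑ i, ecoef T i • evec T i := by
  have h := (adjHerm T).eigenvectorBasis.sum_repr' (WithLp.toLp 2 (fun _ => (1:ℝ)) : EuclideanSpace ℝ V)
  have h2 : ∀ i, ⟪(adjHerm T).eigenvectorBasis i, (WithLp.toLp 2 (fun _ => (1:ℝ)) : EuclideanSpace ℝ V)⟫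
      = ecoef T i := by
    intro i
    rw [PiLp.inner_apply, ecoef, dotProduct]
    simp [evec]
  simp only [h2] at h
  have h3 := congrArg WithLp.ofLp h
  simp at h3
  exact h3.symm

lemma wfun_eq_sum (m : ℕ) : wfun T m = ∑ i, ecoef T i ^ 2 * ev T i ^ m := by
  have h1 : wfun T m = dotProduct (fun _ => 1) ((T.adjMatrix ℝ ^ m) *ᵥ fun _ => 1) := by
    rw [wfun, dotProduct]
    exact Finset.sum_congr rfl fun u _ => (one_mul _).symm
  rw [h1]
  nth_rewrite 2 [ones_eq_sum T]
  rw [show (T.adjMatrix ℝ ^ m) *ᵥ (∑ i, ecoef T i • evec T i)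
      = ∑ i, ecoef T i • ((T.adjMatrix ℝ ^ m) *ᵥ evec T i) by
    rw [← mulVecLin_apply, map_sum]
    exact Finset.sum_congr rfl fun i _ => by rw [_root_.map_smul, mulVecLin_apply]]
  rw [show ∀ (z : V → ℝ), dotProduct (fun _ => (1:ℝ)) z = ∑ u, z u from
    fun z => Finset.sum_congr rfl fun u _ => one_mul _]
  simp only [Finset.sum_apply, Pi.smul_apply, smul_eq_mul]
  rw [Finset.sum_comm]
  refine Finset.sum_congr rfl fun i _ => ?_
  simp only [pow_mulVec_evec, Pi.smul_apply, smul_eq_mul, ← Finset.mul_sum]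
  rw [show ∑ u, evec T i u = ecoef T i by rw [ecoef, dotProduct]; simp]
  ring

noncomputable def degf : V → ℝ := (T.adjMatrix ℝ) *ᵥ fun _ => 1

lemma degf_nonneg (u : V) : 0 ≤ degf T u :=
  Finset.sum_nonneg fun v _ => by
    simpa using mul_nonneg (adj_entry_nonneg T u v) zero_le_one

lemma col_sum_eq_degf (u : V) : ∑ v, T.adjMatrix ℝ v u = degf T u := by
  rw [degf]
  simp only [mulVec, dotProduct, mul_one]
  exact Finset.sum_congr rfl fun v _ => adj_entry_symm T v u

lemma wfun_two_eq : wfun T 2 = ∑ u, degf T u ^ 2 := by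
  rw [wfun]
  have : ∀ u : V, ((T.adjMatrix ℝ ^ 2) *ᵥ fun _ => 1) u = (T.adjMatrix ℝ *ᵥ degf T) u := by
    intro u
    rw [pow_two, ← mulVec_mulVec, degf]
  rw [Finset.sum_congr rfl fun u _ => this u]
  show ∑ u, (T.adjMatrix ℝ *ᵥ degf T) u = _
  simp only [mulVec, dotProduct]
  rw [Finset.sum_comm]
  exact Finset.sum_congr rfl fun u _ => by
    rw [← Finset.sum_mul, col_sum_eq_degf, sq]

lemma sq_entry_le_degf (v b : V) : (T.adjMatrix ℝ ^ 2) v b ≤ degf T b := by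
  rw [pow_two, mul_apply, ← col_sum_eq_degf]
  refine Finset.sum_le_sum fun a _ => ?_
  calc T.adjMatrix ℝ v a * T.adjMatrix ℝ a b
      ≤ 1 * T.adjMatrix ℝ a b :=
        mul_le_mul_of_nonneg_right (adj_entry_le_one T v a) (adj_entry_nonneg T a b)
    _ = T.adjMatrix ℝ a b := one_mul _

lemma cube_row_le (v : V) : ((T.adjMatrix ℝ ^ 3) *ᵥ fun _ => 1) v ≤ wfun T 2 := by
  have h1 : ((T.adjMatrix ℝ ^ 3) *ᵥ fun _ => 1) v = ∑ b, (T.adjMatrix ℝ ^ 2) v b * degf T b := by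
    rw [show (3:ℕ) = 2 + 1 from rfl, pow_succ, ← mulVec_mulVec]
    simp only [mulVec, dotProduct]
    exact Finset.sum_congr rfl fun b _ => by rw [degf]; simp [mulVec, dotProduct]
  rw [h1, wfun_two_eq]
  refine Finset.sum_le_sum fun b _ => ?_
  rw [pow_two (degf T b)]
  exact mul_le_mul_of_nonneg_right (sq_entry_le_degf T v b) (degf_nonneg T b)

lemma abs_ev_cube_le (i : V) : |ev T i| ^ 3 ≤ wfun T 2 := by
  set x := evec T i with hx
  have hx0 : ∃ v, x v ≠ 0 := by
    by_contra hc
    push_neg at hc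
    have : (adjHerm T).eigenvectorBasis i = 0 := by
      apply PiLp.ext
      intro v
      exact hc v
    exact (adjHerm T).eigenvectorBasis.orthonormal.ne_zero i this
  obtain ⟨v0, hv0, hmax⟩ := Finset.exists_max_image Finset.univ (fun v => |x v|)
    ⟨hx0.choose, Finset.mem_univ _⟩
  have hxv0 : 0 < |x v0| := by
    obtain ⟨v, hv⟩ := hx0
    exact lt_of_lt_of_le (abs_pos.2 hv) (hmax v (Finset.mem_univ v))
  have heig := pow_mulVec_evec T 3 i
  have h1 : |ev T i ^ 3 * x v0| ≤ (((T.adjMatrix ℝ ^ 3) *ᵥ fun _ => 1) v0) * |x v0| := by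
    have : ev T i ^ 3 * x v0 = ((T.adjMatrix ℝ ^ 3) *ᵥ x) v0 := by
      rw [heig]; simp [hx]
    rw [this]
    simp only [mulVec, dotProduct]
    calc |∑ w, (T.adjMatrix ℝ ^ 3) v0 w * x w|
        ≤ ∑ w, |(T.adjMatrix ℝ ^ 3) v0 w * x w| := Finset.abs_sum_le_sum_abs _ _
      _ ≤ ∑ w, (T.adjMatrix ℝ ^ 3) v0 w * |x v0| := Finset.sum_le_sum fun w _ => by
          rw [abs_mul, abs_of_nonneg (pow_entry_nonneg T 3 v0 w)]
          exact mul_le_mul_of_nonneg_left (hmax w (Finset.mem_univ w))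
            (pow_entry_nonneg T 3 v0 w)
      _ = (((T.adjMatrix ℝ ^ 3) *ᵥ fun _ => 1) v0) * |x v0| := by
          simp [mulVec, dotProduct, Finset.sum_mul]
  rw [abs_mul, abs_pow] at h1
  have h2 : |ev T i| ^ 3 ≤ ((T.adjMatrix ℝ ^ 3) *ᵥ fun _ => 1) v0 :=
    le_of_mul_le_mul_right h1 hxv0
  exact h2.trans (cube_row_le T v0)

theorem walk_cube_le (j : ℕ) : wfun T (j + 2) ^ 3 ≤ wfun T 2 ^ (j + 3) := by
  cases isEmpty_or_nonempty V with
  | inl hV =>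
    have hz : ∀ m, wfun T m = 0 := fun m => by rw [wfun]; simp
    rw [hz, hz]
    norm_num
  | inr hV =>
    obtain ⟨i0, _, hi0max⟩ := Finset.exists_max_image Finset.univ (fun i => |ev T i|)
      Finset.univ_nonempty
    set r := |ev T i0| with hr
    have hr0 : 0 ≤ r := abs_nonneg _
    have hrw : r ^ 3 ≤ wfun T 2 := abs_ev_cube_le T i0
    have hw2 : 0 ≤ wfun T 2 := wfun_nonneg T 2
    have hbound : wfun T (j + 2) ≤ r ^ j * wfun T 2 := by
      rw [wfun_eq_sum, wfun_eq_sum, Finset.mul_sum]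
      refine Finset.sum_le_sum fun i _ => ?_
      have h1 : ev T i ^ (j + 2) ≤ r ^ j * ev T i ^ 2 := by
        calc ev T i ^ (j + 2) ≤ |ev T i ^ (j + 2)| := le_abs_self _
          _ = |ev T i| ^ j * |ev T i| ^ 2 := by rw [abs_pow, pow_add]
          _ ≤ r ^ j * |ev T i| ^ 2 :=
              mul_le_mul_of_nonneg_right
                (pow_le_pow_left₀ (abs_nonneg _) (hi0max i (Finset.mem_univ i)) j)
                (by positivity)
          _ = r ^ j * ev T i ^ 2 := by rw [sq_abs]
      calc ecoef T i ^ 2 * ev T i ^ (j + 2)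
          ≤ ecoef T i ^ 2 * (r ^ j * ev T i ^ 2) :=
            mul_le_mul_of_nonneg_left h1 (sq_nonneg _)
        _ = r ^ j * (ecoef T i ^ 2 * ev T i ^ 2) := by ring
    calc wfun T (j + 2) ^ 3 ≤ (r ^ j * wfun T 2) ^ 3 :=
          pow_le_pow_left₀ (wfun_nonneg T _) hbound 3
      _ = (r ^ 3) ^ j * wfun T 2 ^ 3 := by ring
      _ ≤ wfun T 2 ^ j * wfun T 2 ^ 3 :=
          mul_le_mul_of_nonneg_right (pow_le_pow_left₀ (by positivity) hrw j) (by positivity)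
      _ = wfun T 2 ^ (j + 3) := by rw [← pow_add]

theorem card_hom_path_real (m : ℕ) :
    (Nat.card (pathGraph (m + 1) →g T) : ℝ) = wfun T m := by
  rw [card_hom_path, card_seqType_eq, wfun]

theorem homDensity_pathGraph (m : ℕ) :
    homDensity (pathGraph (m + 1)) T = wfun T m / (Fintype.card V : ℝ) ^ (m + 1) := by
  rw [homDensity, card_hom_path_real, Fintype.card_fin]

theorem homDensity_nonneg {α β : Type*} [Fintype α] [Fintype β]
    (G : SimpleGraph α) (T' : SimpleGraph β) : 0 ≤ homDensity G T' := by
  rw [homDensity]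
  positivity

theorem density_path_pow (hV : 0 < Fintype.card V) (j : ℕ) :
    homDensity (pathGraph (j + 3)) T ^ 3 ≤ homDensity (pathGraph 3) T ^ (j + 3) := by
  have hN : (0:ℝ) < (Fintype.card V : ℝ) := by exact_mod_cast hV
  rw [show j + 3 = (j + 2) + 1 from rfl, homDensity_pathGraph,
    show (3:ℕ) = 2 + 1 from rfl, homDensity_pathGraph]
  rw [div_pow, div_pow, ← pow_mul, ← pow_mul]
  rw [show (j + 2 + 1) * 3 = (2 + 1) * (j + 2 + 1) by ring]
  exact div_le_div_of_nonneg_right (walk_cube_le T j) (by positivity) |>.trans_eq rfl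

instance finiteHom {γ δ : Type*} [Finite γ] [Finite δ] (G : SimpleGraph γ) (T' : SimpleGraph δ) :
    Finite (G →g T') :=
  Finite.of_injective (fun φ => (φ : γ → δ)) DFunLike.coe_injective

/-- The clique on the first `mm` vertices of `Fin n`. -/
def cliqueGraph (mm n : ℕ) : SimpleGraph (Fin n) where
  Adj a b := a ≠ b ∧ (a : ℕ) < mm ∧ (b : ℕ) < mm
  symm := ⟨by rintro a b ⟨h1, h2, h3⟩; exact ⟨h1.symm, h3, h2⟩⟩
  loopless := ⟨by rintro a ⟨h1, -⟩; exact h1 rfl⟩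

lemma hom_clique_exists {γ : Type*} [Fintype γ] (G : SimpleGraph γ) {n : ℕ}
    (hmn : Fintype.card γ ≤ n) : Nonempty (G →g cliqueGraph (Fintype.card γ) n) := by
  classical
  let e := Fintype.equivFin γ
  refine ⟨⟨fun a => ⟨(e a : ℕ), lt_of_lt_of_le (e a).isLt hmn⟩, ?_⟩⟩
  intro a b hab
  refine ⟨?_, (e a).isLt, (e b).isLt⟩
  intro hcon
  exact hab.ne (e.injective (Fin.ext (by simpa using congrArg Fin.val hcon)))

lemma card_hom_P2_clique_le (mm n : ℕ) :
    Nat.card (pathGraph 3 →g cliqueGraph mm n) ≤ mm ^ 3 := by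
  have a01 : (pathGraph 3).Adj 0 1 := by rw [pathGraph_adj]; left; decide
  have a12 : (pathGraph 3).Adj 1 2 := by rw [pathGraph_adj]; left; decide
  have hlt : ∀ (φ : pathGraph 3 →g cliqueGraph mm n) (v : Fin 3), ((φ v : Fin n) : ℕ) < mm := by
    intro φ v
    have h01 := φ.map_rel a01
    have h12 := φ.map_rel a12
    fin_cases v
    · exact h01.2.1
    · exact h01.2.2
    · exact h12.2.2
  have hinj : Function.Injective
      (fun (φ : pathGraph 3 →g cliqueGraph mm n) (v : Fin 3) =>
        (⟨(φ v : Fin n), hlt φ v⟩ : Fin mm)) := by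
    intro φ ψ h
    apply DFunLike.ext
    intro v
    have := congrFun h v
    exact Fin.ext (by simpa using congrArg Fin.val this)
  calc Nat.card (pathGraph 3 →g cliqueGraph mm n)
      ≤ Nat.card (Fin 3 → Fin mm) := Nat.card_le_card_of_injective _ hinj
    _ = mm ^ 3 := by simp [Nat.card_eq_fintype_card]

lemma rpow_final {x y : ℝ} (hx : 0 ≤ x) (hy : 0 ≤ y) {mm : ℕ} (hm : 0 < mm)
    (h : x ^ (3 : ℕ) ≤ y ^ mm) : x ^ ((3 : ℝ) / mm) ≤ y := by
  have hmR : (0 : ℝ) < mm := by exact_mod_cast hm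
  have h1 : x ^ ((3 : ℝ) / mm) = (x ^ (3 : ℕ)) ^ ((1 : ℝ) / mm) := by
    rw [show (3 : ℝ) / mm = ((3 : ℕ) : ℝ) * (1 / mm) by push_cast; ring,
      Real.rpow_mul hx, Real.rpow_natCast]
  calc x ^ ((3 : ℝ) / mm) = (x ^ (3 : ℕ)) ^ ((1 : ℝ) / mm) := h1
    _ ≤ (y ^ mm) ^ ((1 : ℝ) / mm) := Real.rpow_le_rpow (by positivity) h (by positivity)
    _ = y := by
        rw [← Real.rpow_natCast y mm, ← Real.rpow_mul hy,
          show (mm : ℝ) * (1 / mm) = 1 by field_simp, Real.rpow_one]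

lemma lower_bound {γ : Type*} [Fintype γ] (G : SimpleGraph γ) (hm : 0 < Fintype.card γ)
    {c : ℝ} (hc : c ∈ domSet (pathGraph 3) G) : 3 / (Fintype.card γ : ℝ) ≤ c := by
  set m := Fintype.card γ with hmdef
  by_contra hlt
  push_neg at hlt
  have hmR : (0 : ℝ) < m := by exact_mod_cast hm
  have hcm : c * m < 3 := by
    rw [lt_div_iff₀ hmR] at hlt
    exact hlt
  set ε : ℝ := 3 - c * m with hεdef
  have hε : 0 < ε := by simp [hεdef]; linarith
  set B : ℝ := ((m : ℝ) ^ 3) ^ ((1 : ℝ) / ε) with hBdef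
  obtain ⟨n, hn⟩ := exists_nat_gt (max (m : ℝ) B)
  have hmn : m ≤ n := by
    have : (m : ℝ) < n := lt_of_le_of_lt (le_max_left _ _) hn
    exact_mod_cast this.le
  have hn0 : 0 < n := lt_of_lt_of_le hm hmn
  have hnR : (0 : ℝ) < n := by exact_mod_cast hn0
  have h := hc.2 n hn0 (cliqueGraph m n)
  have h1 : (1 : ℝ) / (n : ℝ) ^ m ≤ homDensity G (cliqueGraph m n) := by
    rw [homDensity, Fintype.card_fin, ← hmdef]
    have hpos : 0 < Nat.card (G →g cliqueGraph m n) :=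
      @Nat.card_pos _ (hom_clique_exists G hmn) _
    have : (1 : ℝ) ≤ (Nat.card (G →g cliqueGraph m n) : ℝ) := by exact_mod_cast hpos
    apply div_le_div_of_nonneg_right this (by positivity) |>.trans_eq rfl
  have h2 : homDensity (pathGraph 3) (cliqueGraph m n) ≤ (m : ℝ) ^ 3 / (n : ℝ) ^ 3 := by
    rw [homDensity, Fintype.card_fin]
    rw [show Fintype.card (Fin 3) = 3 from by simp]
    have : ((Nat.card (pathGraph 3 →g cliqueGraph m n)) : ℝ) ≤ (m : ℝ) ^ 3 := by
      exact_mod_cast card_hom_P2_clique_le m n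
    exact div_le_div_of_nonneg_right this (by positivity) |>.trans_eq rfl
  have h3 : ((1 : ℝ) / (n : ℝ) ^ m) ^ c ≤ (m : ℝ) ^ 3 / (n : ℝ) ^ 3 :=
    le_trans (Real.rpow_le_rpow (by positivity) h1 hc.1) (le_trans h h2)
  have h4 : ((1 : ℝ) / (n : ℝ) ^ m) ^ c = (n : ℝ) ^ (-((m : ℝ) * c)) := by
    rw [one_div, ← Real.rpow_natCast (n : ℝ) m, ← Real.rpow_neg hnR.le,
      ← Real.rpow_mul hnR.le]
    ring_nf
  rw [h4] at h3
  have h5 : (n : ℝ) ^ ε ≤ (m : ℝ) ^ 3 := by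
    have hsplit : (n : ℝ) ^ ε = (n : ℝ) ^ (-((m : ℝ) * c)) * (n : ℝ) ^ (3 : ℝ) := by
      rw [← Real.rpow_add hnR]
      congr 1
      rw [hεdef]; ring
    rw [hsplit]
    calc (n : ℝ) ^ (-((m : ℝ) * c)) * (n : ℝ) ^ (3 : ℝ)
        ≤ ((m : ℝ) ^ 3 / (n : ℝ) ^ 3) * (n : ℝ) ^ (3 : ℝ) :=
          mul_le_mul_of_nonneg_right h3 (Real.rpow_nonneg hnR.le _)
      _ = (m : ℝ) ^ 3 := by
          rw [show ((n : ℝ) ^ (3 : ℝ)) = (n : ℝ) ^ (3 : ℕ) by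
            rw [← Real.rpow_natCast (n : ℝ) 3]; norm_num]
          field_simp
  have h6 : (m : ℝ) ^ 3 < (n : ℝ) ^ ε := by
    have hB : B < (n : ℝ) := lt_of_le_of_lt (le_max_right _ _) hn
    have hB0 : 0 ≤ B := Real.rpow_nonneg (by positivity) _
    calc (m : ℝ) ^ 3 = B ^ ε := by
          rw [hBdef, ← Real.rpow_mul (by positivity), show (1 : ℝ) / ε * ε = 1 by
            field_simp, Real.rpow_one]
      _ < (n : ℝ) ^ ε := Real.rpow_lt_rpow hB0 hB hε
  exact absurd h5 (not_le.2 h6)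

end Aux

theorem stmt_15 {α : Type*} [Fintype α] (H : SimpleGraph α)
    (k : ℕ) (l : Fin k → ℕ) (hl : ∀ i, 2 ≤ l i)
    (f : (i : Fin k) → Fin (l i + 1) → α)
    (hinj : Function.Injective (fun p : Σ i : Fin k, Fin (l i + 1) => f p.1 p.2))
    (hsurj : Function.Surjective (fun p : Σ i : Fin k, Fin (l i + 1) => f p.1 p.2))
    (hpath : ∀ (i : Fin k) (j : Fin (l i)), H.Adj (f i j.castSucc) (f i j.succ)) :
    domExp (pathGraph 3) H = 3 / (Fintype.card α : ℝ) := by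
  classical
  rcases Nat.eq_zero_or_pos (Fintype.card α) with hm0 | hmpos
  · -- empty vertex set : domSet is empty and both sides are 0
    haveI : IsEmpty α := Fintype.card_eq_zero_iff.mp hm0
    have hempty : domSet (pathGraph 3) H = ∅ := by
      rw [Set.eq_empty_iff_forall_notMem]
      rintro c ⟨hc0, hc⟩
      have h := hc 1 one_pos ⊥
      have hH : homDensity H (⊥ : SimpleGraph (Fin 1)) = 1 := by
        rw [homDensity, hm0]
        have : Nat.card (H →g (⊥ : SimpleGraph (Fin 1))) = 1 := by
          haveI : Unique (H →g (⊥ : SimpleGraph (Fin 1))) := by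
            refine ⟨⟨⟨isEmptyElim, fun {a} => isEmptyElim a⟩⟩, fun φ => ?_⟩
            apply DFunLike.ext
            intro a
            exact isEmptyElim a
          exact Nat.card_unique
        rw [this]
        norm_num
      have hP : homDensity (pathGraph 3) (⊥ : SimpleGraph (Fin 1)) = 0 := by
        rw [homDensity]
        haveI : IsEmpty (pathGraph 3 →g (⊥ : SimpleGraph (Fin 1))) := by
          refine ⟨fun φ => ?_⟩
          have a01 : (pathGraph 3).Adj 0 1 := by rw [pathGraph_adj]; left; decide
          exact φ.map_rel a01
        rw [Nat.card_of_isEmpty]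
        norm_num
      rw [hH, Real.one_rpow, hP] at h
      linarith
    rw [domExp, hempty, Real.sInf_empty, hm0]
    norm_num
  · -- main case
    have hmem : (3 : ℝ) / (Fintype.card α : ℝ) ∈ domSet (pathGraph 3) H := by
      refine ⟨by positivity, ?_⟩
      intro n hn T'
      haveI : DecidableRel T'.Adj := fun a b => Classical.propDecidable _
      set y := homDensity (pathGraph 3) T' with hydef
      have hy0 : 0 ≤ y := homDensity_nonneg _ _
      have hx0 : 0 ≤ homDensity H T' := homDensity_nonneg _ _
      have hsum : Fintype.card α = ∑ i, (l i + 1) := by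
        have e : (Σ i : Fin k, Fin (l i + 1)) ≃ α := Equiv.ofBijective _ ⟨hinj, hsurj⟩
        rw [← Fintype.card_congr e, Fintype.card_sigma]
        simp
      have hΦ : Nat.card (H →g T') ≤ ∏ i, Nat.card (pathGraph (l i + 1) →g T') := by
        rw [← Nat.card_pi]
        refine Nat.card_le_card_of_injective
          (fun φ i => seqHom T' (fun j => φ (f i j)) (fun j => φ.map_rel (hpath i j))) ?_
        intro φ ψ hfeq
        apply DFunLike.ext
        intro a
        obtain ⟨⟨i, j⟩, rfl⟩ := hsurj a
        have h1 := congrFun hfeq i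
        have h2 := congrArg (fun (ρ : pathGraph (l i + 1) →g T') => (ρ : Fin (l i + 1) → Fin n))
          h1
        exact congrFun h2 j
      have hx : homDensity H T' ≤ ∏ i, homDensity (pathGraph (l i + 1)) T' := by
        simp only [homDensity, Fintype.card_fin]
        rw [Finset.prod_div_distrib]
        rw [show ∏ x : Fin k, ((n : ℝ)) ^ (l x + 1)
            = (n : ℝ) ^ (Fintype.card α) by
          rw [Finset.prod_pow_eq_pow_sum, ← hsum]]
        have hnum : ((Nat.card (H →g T')) : ℝ)
            ≤ ∏ i, ((Nat.card (pathGraph (l i + 1) →g T')) : ℝ) := by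
          rw [← Nat.cast_prod]
          exact_mod_cast hΦ
        have hd : (0 : ℝ) < (n : ℝ) ^ (Fintype.card α) := by
          have : (0 : ℝ) < (n : ℝ) := by exact_mod_cast hn
          positivity
        exact div_le_div_of_nonneg_right hnum hd.le |>.trans_eq rfl
      have hkey : homDensity H T' ^ (3 : ℕ) ≤ y ^ (Fintype.card α) := by
        calc homDensity H T' ^ (3 : ℕ)
            ≤ (∏ i, homDensity (pathGraph (l i + 1)) T') ^ (3 : ℕ) :=
              pow_le_pow_left₀ hx0 hx 3
          _ = ∏ i, (homDensity (pathGraph (l i + 1)) T') ^ (3 : ℕ) := by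
              rw [Finset.prod_pow]
          _ ≤ ∏ i, y ^ (l i + 1) := by
              refine Finset.prod_le_prod
                (fun i _ => pow_nonneg (homDensity_nonneg _ _) _) (fun i _ => ?_)
              have hli : l i + 1 = (l i - 2) + 3 := by have := hl i; omega
              rw [hli]
              exact density_path_pow T' (by simpa using hn) (l i - 2)
          _ = y ^ (∑ i, (l i + 1)) := Finset.prod_pow_eq_pow_sum _ _ _
          _ = y ^ (Fintype.card α) := by rw [← hsum]
      exact rpow_final hx0 hy0 hmpos hkey
    apply le_antisymm
    · exact csInf_le ⟨0, fun c hc => hc.1⟩ hmem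
    · exact le_csInf ⟨_, hmem⟩ (fun c hc => lower_bound H hmpos hc)
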